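/- arXiv:1608.05371 — 3 statements merged into one kernel-verified Lean document; each statement's English description precedes it below -/
import Mathlib

section
/- Let A be a countable index set and {G_α}_{α∈A} a collection of profinite groups such that for all α ≠ β, the groups G_α and G_β have no finite simple quotients in common. If H is a closed subgroup of G = ∏_{α∈A} G_α such that the projection of H to each G_α is all of G_α, then H = G. -/
/-- `S` is a finite simple (continuous) quotient of the profinite group `G`. -/
def IsFiniteSimpleQuotient (G : Type*) [Group G] [TopologicalSpace G]
    (S : Type*) [Group S] : Prop :=
  Finite S ∧ IsSimpleGroup S ∧
    ∃ φ : G →* S, @Continuous _ _ _ ⊥ φ ∧ Function.Surjective φ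

/-!
Since `H` is closed and a basic open set of the product constrains only finitely many coordinates,
it suffices that `H` maps onto every finite subproduct `∏_{α ∈ F} G_α`, by induction on `F`. When
a coordinate `a` is added, the image `K` of `H` in `G_a × ∏_{β ∈ F} G_β` is closed and projects
onto both factors. If the closed normal subgroup `N = {b | (1, b) ∈ K}` were proper, profiniteness
would give a finite simple quotient `f` of the right factor killing `N`, and `(x, y) ↦ f y` on `K`
would descend to a continuous surjection from `G_a`. But a finite simple quotient of a finite
product is one of some factor `G_β`, against the hypothesis; so `N` is everything and so is `K`.
-/

universe u v

open Function

theorem MonoidHom.continuous_bot_of_isOpen_ker {G S : Type*} [Group G] [TopologicalSpace G]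
    [IsTopologicalGroup G] [Group S] (f : G →* S) (hf : IsOpen (f.ker : Set G)) :
    @Continuous _ _ _ ⊥ f := by
  let _ : TopologicalSpace S := ⊥
  have : DiscreteTopology S := ⟨rfl⟩
  refine continuous_of_continuousAt_one f ?_
  rw [ContinuousAt, map_one, nhds_discrete S, Filter.tendsto_pure]
  exact hf.mem_nhds f.ker.one_mem

theorem exists_surjective_isSimpleGroup_of_finite (Q : Type u) [Group Q] [Finite Q]
    [Nontrivial Q] : ∃ (S : Type v) (_ : Group S) (f : Q →* S), Finite S ∧ IsSimpleGroup S ∧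
      Surjective f := by
  induction hn : Nat.card Q using Nat.strong_induction_on generalizing Q with
  | _ n ih =>
  by_cases hQ : IsSimpleGroup Q
  · let e : Shrink.{v} Q ≃* Q := Shrink.mulEquiv
    exact ⟨_, _, e.symm.toMonoidHom, inferInstance, e.isSimpleGroup, e.symm.surjective⟩
  obtain ⟨N, hN, hN_bot, hN_top⟩ : ∃ N : Subgroup Q, N.Normal ∧ N ≠ ⊥ ∧ N ≠ ⊤ := by
    contrapose! hQ
    exact ⟨fun N hN => or_iff_not_imp_left.mpr (hQ N hN)⟩
  have hcard : Nat.card (Q ⧸ N) < n := by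
    have h₁ := N.card_eq_card_quotient_mul_card_subgroup
    have h₂ := (Subgroup.one_lt_card_iff_ne_bot N).mpr hN_bot
    have h₃ : 0 < Nat.card Q := Nat.card_pos
    rw [← hn]; nlinarith
  have : Nontrivial (Q ⧸ N) := QuotientGroup.nontrivial_iff.mpr hN_top
  obtain ⟨S, _, f, hS, hS_simple, hf⟩ := ih _ hcard (Q ⧸ N) rfl
  exact ⟨S, _, f.comp (QuotientGroup.mk' N), hS, hS_simple,
    hf.comp (QuotientGroup.mk'_surjective N)⟩

section Profinite

variable {Q : Type u} [Group Q] [TopologicalSpace Q] [IsTopologicalGroup Q] [CompactSpace Q]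
  [TotallyDisconnectedSpace Q]

theorem Subgroup.exists_isOpen_normal_le_ne_top_of_isClosed (N : Subgroup Q) [N.Normal]
    (hN : IsClosed (N : Set Q)) (hN_top : N ≠ ⊤) :
    ∃ M : Subgroup Q, M.Normal ∧ IsOpen (M : Set Q) ∧ N ≤ M ∧ M ≠ ⊤ := by
  obtain ⟨M, ⟨hM_open, hNM⟩, hM_top⟩ : ∃ M ∈ {M : Subgroup Q | IsOpen (M : Set Q) ∧ N ≤ M},
      M ≠ ⊤ := by
    by_contra! h
    exact hN_top <| (ProfiniteGrp.closedSubgroup_eq_sInf_open ⟨N, hN⟩).trans (sInf_eq_top.mpr h)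
  have : Finite (Q ⧸ M) := M.quotient_finite_of_isOpen hM_open
  have : M.FiniteIndex := M.finiteIndex_of_finite_quotient
  refine ⟨M.normalCore, M.normalCore_normal, ?_, Subgroup.normal_le_normalCore.mpr hNM,
    ne_top_of_le_ne_top hM_top M.normalCore_le⟩
  exact M.normalCore.isOpen_of_isClosed_of_finiteIndex
    (M.normalCore_isClosed (M.isClosed_of_isOpen hM_open))

theorem Subgroup.exists_finite_simple_quotient_le_ker (N : Subgroup Q) [N.Normal]
    (hN : IsClosed (N : Set Q)) (hN_top : N ≠ ⊤) :
    ∃ (S : Type v) (_ : Group S) (f : Q →* S), Finite S ∧ IsSimpleGroup S ∧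
      IsOpen (f.ker : Set Q) ∧ Surjective f ∧ N ≤ f.ker := by
  obtain ⟨M, hM, hM_open, hNM, hM_top⟩ := N.exists_isOpen_normal_le_ne_top_of_isClosed hN hN_top
  have : Finite (Q ⧸ M) := M.quotient_finite_of_isOpen hM_open
  have : Nontrivial (Q ⧸ M) := QuotientGroup.nontrivial_iff.mpr hM_top
  obtain ⟨S, _, g, hS, hS_simple, hg⟩ := exists_surjective_isSimpleGroup_of_finite.{u, v} (Q ⧸ M)
  have hM_ker : M ≤ (g.comp (QuotientGroup.mk' M)).ker :=
    (QuotientGroup.ker_mk' M).ge.trans ((QuotientGroup.mk' M).ker_le_comap g.ker)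
  exact ⟨S, _, g.comp (QuotientGroup.mk' M), hS, hS_simple, Subgroup.isOpen_mono hM_ker hM_open,
    hg.comp (QuotientGroup.mk'_surjective M), hNM.trans hM_ker⟩

end Profinite

def NoCommonFiniteSimpleQuotient (Q₁ Q₂ : Type*) [Group Q₁] [TopologicalSpace Q₁] [Group Q₂]
    [TopologicalSpace Q₂] : Prop :=
  ∀ (S : Type) [Group S], ¬(IsFiniteSimpleQuotient Q₁ S ∧ IsFiniteSimpleQuotient Q₂ S)

theorem IsFiniteSimpleQuotient.exists_of_pi {ι : Type*} [Finite ι] {G : ι → Type*}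
    [∀ i, Group (G i)] [∀ i, TopologicalSpace (G i)] {S : Type*} [Group S]
    (hS : IsFiniteSimpleQuotient (∀ i, G i) S) : ∃ i, IsFiniteSimpleQuotient (G i) S := by
  classical
  obtain ⟨hS_fin, hS_simple, φ, hφ_cont, hφ_surj⟩ := hS
  by_contra! hnone
  have hφ_single : ∀ i (a : G i), φ (Pi.mulSingle i a) = 1 := by
    intro i a
    have hnormal : (φ.comp (MonoidHom.mulSingle G i)).range.Normal := by
      refine ⟨?_⟩
      rintro _ ⟨b, rfl⟩ s
      obtain ⟨g, rfl⟩ := hφ_surj s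
      refine ⟨g i * b * (g i)⁻¹, ?_⟩
      have hconj : Pi.mulSingle i (g i * b * (g i)⁻¹) = g * Pi.mulSingle i b * g⁻¹ := by
        ext j
        by_cases hj : j = i
        · subst hj; simp
        · simp [Pi.mulSingle_eq_of_ne hj]
      simp [hconj]
    rcases hnormal.eq_bot_or_eq_top with hbot | htop
    · exact DFunLike.congr_fun (MonoidHom.range_eq_bot_iff.mp hbot) a
    · refine absurd ⟨hS_fin, hS_simple, φ.comp (MonoidHom.mulSingle G i), ?_,
        MonoidHom.range_eq_top.mp htop⟩ (hnone i)
      let _ : TopologicalSpace S := ⊥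
      exact hφ_cont.comp (continuous_mulSingle i)
  obtain ⟨s, hs⟩ := exists_ne (1 : S)
  obtain ⟨g, rfl⟩ := hφ_surj s
  exact hs (Subgroup.pi_mem_of_mulSingle_mem (H := φ.ker) g fun i => hφ_single i (g i))

namespace Subgroup

variable {Q₁ Q₂ : Type*} [Group Q₁] [Group Q₂] {K : Subgroup (Q₁ × Q₂)}

theorem exists_monoidHom_apply_fst_eq_apply_snd {S : Type*} [Group S]
    (h₁ : Surjective (Prod.fst ∘ K.subtype)) (f : Q₂ →* S) (hf : K.goursatSnd ≤ f.ker) :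
    ∃ φ : Q₁ →* S, ∀ x ∈ K, φ x.1 = f x.2 := by
  let p : K →* Q₁ := (MonoidHom.fst Q₁ Q₂).comp K.subtype
  let ψ : K →* S := f.comp ((MonoidHom.snd Q₁ Q₂).comp K.subtype)
  have hker : p.ker ≤ ψ.ker := by
    rintro ⟨⟨a, b⟩, hab⟩ (rfl : a = 1)
    exact hf (mem_goursatSnd.mpr hab)
  exact ⟨p.liftOfRightInverse _ (rightInverse_surjInv h₁) ⟨ψ, hker⟩,
    fun x hx => p.liftOfRightInverse_comp_apply _ _ ⟨ψ, hker⟩ ⟨x, hx⟩⟩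

variable [TopologicalSpace Q₁] [IsTopologicalGroup Q₁] [CompactSpace Q₁] [T2Space Q₁]
  [TopologicalSpace Q₂] [IsTopologicalGroup Q₂] [CompactSpace Q₂]

theorem isFiniteSimpleQuotient_of_goursatSnd_le_ker {S : Type*} [Group S] [Finite S]
    [IsSimpleGroup S] (hK : IsClosed (K : Set (Q₁ × Q₂)))
    (h₁ : Surjective (Prod.fst ∘ K.subtype)) (h₂ : Surjective (Prod.snd ∘ K.subtype))
    (f : Q₂ →* S) (hf_open : IsOpen (f.ker : Set Q₂)) (hf_surj : Surjective f)
    (hf : K.goursatSnd ≤ f.ker) : IsFiniteSimpleQuotient Q₁ S := by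
  obtain ⟨φ, hφ⟩ := exists_monoidHom_apply_fst_eq_apply_snd h₁ f hf
  have hφ_surj : Surjective φ := by
    intro s
    obtain ⟨b, rfl⟩ := hf_surj s
    obtain ⟨⟨⟨a, b⟩, hab⟩, rfl⟩ := h₂ b
    exact ⟨a, hφ _ hab⟩
  have hφ_ker : (φ.ker : Set Q₁) = Prod.fst '' ((K : Set (Q₁ × Q₂)) ∩ Prod.snd ⁻¹' f.ker) := by
    ext a
    constructor
    · intro ha
      obtain ⟨⟨⟨a, b⟩, hab⟩, rfl⟩ := h₁ a
      exact ⟨(a, b), ⟨hab, (hφ _ hab).symm.trans ha⟩, rfl⟩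
    · rintro ⟨⟨a, b⟩, ⟨hab, hb⟩, rfl⟩
      exact (hφ _ hab).trans hb
  have hφ_closed : IsClosed (φ.ker : Set Q₁) := by
    rw [hφ_ker]
    exact ((hK.inter ((f.ker.isClosed_of_isOpen hf_open).preimage continuous_snd)).isCompact.image
      continuous_fst).isClosed
  exact ⟨inferInstance, inferInstance, φ, φ.continuous_bot_of_isOpen_ker
    (φ.ker.isOpen_of_isClosed_of_finiteIndex hφ_closed), hφ_surj⟩

theorem eq_top_of_noCommonFiniteSimpleQuotient [TotallyDisconnectedSpace Q₂]
    (hQ : NoCommonFiniteSimpleQuotient Q₁ Q₂) (hK : IsClosed (K : Set (Q₁ × Q₂)))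
    (h₁ : Surjective (Prod.fst ∘ K.subtype)) (h₂ : Surjective (Prod.snd ∘ K.subtype)) :
    K = ⊤ := by
  have := normal_goursatSnd h₂
  by_contra hK_top
  have hN_top : K.goursatSnd ≠ ⊤ := by
    intro hN_top
    refine hK_top (eq_top_iff.mpr fun ⟨a, b⟩ _ => ?_)
    obtain ⟨⟨⟨a, c⟩, hac⟩, rfl⟩ := h₁ a
    have : ((1 : Q₁), c⁻¹ * b) ∈ K := mem_goursatSnd.mp (hN_top ▸ mem_top _)
    simpa using mul_mem hac this
  have hN_closed : IsClosed (K.goursatSnd : Set Q₂) := by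
    have : (K.goursatSnd : Set Q₂) = (fun b => ((1 : Q₁), b)) ⁻¹' K :=
      Set.ext fun _ => mem_goursatSnd
    exact this ▸ hK.preimage (continuous_const.prodMk continuous_id)
  obtain ⟨S, _, f, _, _, hf_open, hf_surj, hf⟩ :=
    K.goursatSnd.exists_finite_simple_quotient_le_ker hN_closed hN_top
  exact hQ S ⟨isFiniteSimpleQuotient_of_goursatSnd_le_ker hK h₁ h₂ f hf_open hf_surj hf,
    inferInstance, inferInstance, f, f.continuous_bot_of_isOpen_ker hf_open, hf_surj⟩

end Subgroup

theorem dense_of_forall_finset_exists_eqOn {ι : Type*} {X : ι → Type*}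
    [∀ i, TopologicalSpace (X i)] {T : Set (∀ i, X i)}
    (hT : ∀ (F : Finset ι) (x : ∀ i, X i), ∃ y ∈ T, ∀ i ∈ F, y i = x i) : Dense T := by
  intro x
  rw [mem_closure_iff_nhds, nhds_pi]
  intro t ht
  obtain ⟨F, u, hu, hFu⟩ := Filter.mem_pi'.mp ht
  obtain ⟨y, hyT, hyx⟩ := hT F x
  exact ⟨y, hFu fun i hi => hyx i hi ▸ mem_of_mem_nhds (hu i), hyT⟩

section Product

variable {A : Type*} {G : A → Type*} [∀ α, Group (G α)] [∀ α, TopologicalSpace (G α)]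
  [∀ α, IsTopologicalGroup (G α)] [∀ α, CompactSpace (G α)] [∀ α, T2Space (G α)]
  [∀ α, TotallyDisconnectedSpace (G α)]

theorem Subgroup.exists_mem_eqOn_finset_of_noCommonFiniteSimpleQuotient
    (hG : Pairwise fun α β => NoCommonFiniteSimpleQuotient (G α) (G β))
    {H : Subgroup (∀ α, G α)} (hH : IsClosed (H : Set (∀ α, G α)))
    (hproj : ∀ α, H.map (Pi.evalMonoidHom G α) = ⊤) (F : Finset A) (g : ∀ α, G α) :
    ∃ h ∈ H, ∀ α ∈ F, h α = g α := by
  classical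
  induction F using Finset.induction_on generalizing g with
  | empty => exact ⟨1, H.one_mem, by simp⟩
  | insert a s ha ih =>
    let π : (∀ α, G α) →* G a × ∀ β : s, G β :=
      (Pi.evalMonoidHom G a).prod (MonoidHom.pi fun β : s => Pi.evalMonoidHom G β)
    have hπ : Continuous π :=
      (continuous_apply a).prodMk (continuous_pi fun β => continuous_apply (β : A))
    have hQ : NoCommonFiniteSimpleQuotient (G a) (∀ β : s, G β) := by
      rintro S _ ⟨hSa, hSs⟩
      obtain ⟨β, hSβ⟩ := hSs.exists_of_pi
      exact hG (fun h : a = β => ha (h ▸ β.2)) S ⟨hSa, hSβ⟩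
    have hK_closed : IsClosed ((H.map π : Subgroup _) : Set (G a × ∀ β : s, G β)) :=
      (hH.isCompact.image hπ).isClosed
    have hK_fst : Surjective (Prod.fst ∘ (H.map π).subtype) := by
      intro x
      obtain ⟨h, hh, rfl⟩ := (hproj a).ge (Subgroup.mem_top x)
      exact ⟨⟨π h, Subgroup.mem_map_of_mem π hh⟩, rfl⟩
    have hK_snd : Surjective (Prod.snd ∘ (H.map π).subtype) := by
      intro y
      obtain ⟨x, rfl⟩ := Subtype.surjective_restrict (fun α => α ∈ s) y
      obtain ⟨h, hh, hhx⟩ := ih x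
      exact ⟨⟨π h, Subgroup.mem_map_of_mem π hh⟩, funext fun β => hhx β β.2⟩
    obtain ⟨h, hh, hhg⟩ := (Subgroup.eq_top_of_noCommonFiniteSimpleQuotient hQ hK_closed hK_fst
      hK_snd).ge (Subgroup.mem_top (π g))
    simp only [π, MonoidHom.prod_apply, Prod.mk.injEq] at hhg
    exact ⟨h, hh, (Finset.forall_mem_insert _ _ _).mpr
      ⟨hhg.1, fun β hβ => congr_fun hhg.2 ⟨β, hβ⟩⟩⟩

end Product

theorem closed_subgroup_eq_top_of_surjective_projections_general
    {A : Type*} (G : A → Type*) [∀ α, Group (G α)]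
    [∀ α, TopologicalSpace (G α)] [∀ α, IsTopologicalGroup (G α)]
    [∀ α, CompactSpace (G α)] [∀ α, T2Space (G α)]
    [∀ α, TotallyDisconnectedSpace (G α)]
    (hdisj : ∀ α β : A, α ≠ β → ∀ (S : Type) [Group S],
      ¬(IsFiniteSimpleQuotient (G α) S ∧ IsFiniteSimpleQuotient (G β) S))
    (H : Subgroup (∀ α, G α)) (hH : IsClosed (H : Set (∀ α, G α)))
    (hproj : ∀ α, Subgroup.map (Pi.evalMonoidHom G α) H = ⊤) :
    H = ⊤ := by
  have hdense : Dense (H : Set (∀ α, G α)) := dense_of_forall_finset_exists_eqOn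
    (H.exists_mem_eqOn_finset_of_noCommonFiniteSimpleQuotient (fun α β => hdisj α β) hH hproj)
  exact Subgroup.coe_eq_univ.mp (hH.closure_eq ▸ hdense.closure_eq)

/-- Goursat-type lemma: if `{G_α}_{α ∈ A}` is a countable collection of profinite
groups no two of which share a finite simple quotient, and `H` is a closed
subgroup of `∏ G_α` projecting onto every factor, then `H = ∏ G_α`. -/
theorem closed_subgroup_eq_top_of_surjective_projections
    {A : Type*} [Countable A] (G : A → Type*) [∀ α, Group (G α)]
    [∀ α, TopologicalSpace (G α)] [∀ α, IsTopologicalGroup (G α)]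
    [∀ α, CompactSpace (G α)] [∀ α, T2Space (G α)]
    [∀ α, TotallyDisconnectedSpace (G α)]
    (hdisj : ∀ α β : A, α ≠ β → ∀ (S : Type) [Group S],
      ¬(IsFiniteSimpleQuotient (G α) S ∧ IsFiniteSimpleQuotient (G β) S))
    (H : Subgroup (∀ α, G α)) (hH : IsClosed (H : Set (∀ α, G α)))
    (hproj : ∀ α, Subgroup.map (Pi.evalMonoidHom G α) H = ⊤) :
    H = ⊤ :=
  closed_subgroup_eq_top_of_surjective_projections_general G hdisj H hH hproj
end

section
/- For all g ≥ 1, the commutator subalgebra [sp_{2g}(ℤ/4ℤ), sp_{2g}(ℤ/4ℤ)] contains 2·sp_{2g}(ℤ/2ℤ), i.e., every matrix of the form 2M with M ∈ sp_{2g}(ℤ/4ℤ) lies in the span of brackets. -/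
open Matrix

/-- The standard symplectic form `Ω = [[0, id],[−id, 0]]`. -/
def Omega (g : ℕ) (R : Type*) [CommRing R] :
    Matrix (Fin g ⊕ Fin g) (Fin g ⊕ Fin g) R :=
  Matrix.fromBlocks 0 1 (-1) 0

/-- The symplectic Lie algebra `sp_{2g}(R) = {M : MᵀΩ + ΩM = 0}`. -/
def sp (g : ℕ) (R : Type*) [CommRing R] :
    Submodule R (Matrix (Fin g ⊕ Fin g) (Fin g ⊕ Fin g) R) where
  carrier := {M | Mᵀ * Omega g R + Omega g R * M = 0}
  add_mem' := by
    intro a b ha hb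
    simp only [Set.mem_setOf_eq] at *
    rw [Matrix.transpose_add, Matrix.add_mul, Matrix.mul_add]
    rw [add_add_add_comm, ha, hb, add_zero]
  zero_mem' := by simp
  smul_mem' := by
    intro c a ha
    simp only [Set.mem_setOf_eq] at *
    rw [Matrix.transpose_smul, Matrix.smul_mul, Matrix.mul_smul, ← smul_add, ha, smul_zero]

/-! Write `M ∈ sp_{2g}(R)` in blocks as `[[A, B], [C, -Aᵀ]]` with `B`, `C` symmetric.
Twice the off-diagonal part is the bracket of `diag(1, -1)` with `[[0, B], [-C, 0]]`.
The block-diagonal part `diag(A, -Aᵀ)` is itself a sum of brackets: `[[0, S], [0, 0]]` and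
`[[0, 0], [T, 0]]` bracket to `diag(ST, -(ST)ᵀ)`, and `E_ij = E_ii T` with `T = E_ii` or
`T = E_ij + E_ji`. -/

section

variable {g : ℕ} {R : Type*} [CommRing R]

theorem fromBlocks_mem_sp_iff {A B C E : Matrix (Fin g) (Fin g) R} :
    fromBlocks A B C E ∈ sp g R ↔ Bᵀ = B ∧ Cᵀ = C ∧ E = -Aᵀ := by
  change (fromBlocks A B C E)ᵀ * Omega g R + Omega g R * fromBlocks A B C E = 0 ↔ _
  rw [Omega, fromBlocks_transpose, fromBlocks_multiply, fromBlocks_multiply, fromBlocks_add,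
    ← fromBlocks_zero, fromBlocks_inj]
  simp only [Matrix.mul_zero, Matrix.mul_one, Matrix.mul_neg, Matrix.zero_mul, Matrix.one_mul,
    Matrix.neg_mul, add_zero, zero_add]
  constructor
  · rintro ⟨hC, hAE, -, hB⟩
    exact ⟨add_neg_eq_zero.1 hB, neg_add_eq_zero.1 hC, eq_neg_of_add_eq_zero_right hAE⟩
  · rintro ⟨hB, hC, rfl⟩
    exact ⟨neg_add_eq_zero.2 hC, add_neg_cancel _, by simp, add_neg_eq_zero.2 hB⟩

theorem mem_sp_iff_toBlocks {M : Matrix (Fin g ⊕ Fin g) (Fin g ⊕ Fin g) R} :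
    M ∈ sp g R ↔ M.toBlocks₁₂ᵀ = M.toBlocks₁₂ ∧ M.toBlocks₂₁ᵀ = M.toBlocks₂₁ ∧
      M.toBlocks₂₂ = -M.toBlocks₁₁ᵀ := by
  conv_lhs => rw [← fromBlocks_toBlocks M]
  exact fromBlocks_mem_sp_iff

def spBracketSpan (g : ℕ) (R : Type*) [CommRing R] :
    Submodule R (Matrix (Fin g ⊕ Fin g) (Fin g ⊕ Fin g) R) :=
  Submodule.span R {X | ∃ A ∈ sp g R, ∃ B ∈ sp g R, X = A * B - B * A}

theorem bracket_mem_spBracketSpan {A B : Matrix (Fin g ⊕ Fin g) (Fin g ⊕ Fin g) R}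
    (hA : A ∈ sp g R) (hB : B ∈ sp g R) : A * B - B * A ∈ spBracketSpan g R :=
  Submodule.subset_span ⟨A, hA, B, hB, rfl⟩

theorem fromBlocks_mul_mem_spBracketSpan {B C : Matrix (Fin g) (Fin g) R}
    (hB : Bᵀ = B) (hC : Cᵀ = C) :
    fromBlocks (B * C) 0 0 (-(B * C)ᵀ) ∈ spBracketSpan g R := by
  have key : fromBlocks 0 B 0 0 * fromBlocks 0 0 C 0 - fromBlocks 0 0 C 0 * fromBlocks 0 B 0 0 =
      fromBlocks (B * C) 0 0 (-(B * C)ᵀ) := by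
    rw [fromBlocks_multiply, fromBlocks_multiply, transpose_mul, hB, hC, sub_eq_add_neg,
      fromBlocks_neg, fromBlocks_add]
    simp
  rw [← key]
  exact bracket_mem_spBracketSpan (fromBlocks_mem_sp_iff.2 ⟨hB, by simp, by simp⟩)
    (fromBlocks_mem_sp_iff.2 ⟨by simp, hC, by simp⟩)

theorem fromBlocks_single_mem_spBracketSpan (i j : Fin g) :
    fromBlocks (single i j (1 : R)) 0 0 (-(single i j 1)ᵀ) ∈ spBracketSpan g R := by
  have hii : (single i i (1 : R))ᵀ = single i i 1 := transpose_single i i 1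
  rcases eq_or_ne i j with rfl | hij
  · simpa using fromBlocks_mul_mem_spBracketSpan hii hii
  · have hsym : (single i j (1 : R) + single j i 1)ᵀ = single i j 1 + single j i 1 := by
      rw [transpose_add, transpose_single, transpose_single, add_comm]
    have hprod : single i i (1 : R) * (single i j 1 + single j i 1) = single i j 1 := by
      rw [mul_add, single_mul_single_same, one_mul, single_mul_single_of_ne (h := hij), add_zero]
    simpa only [hprod] using fromBlocks_mul_mem_spBracketSpan hii hsym

theorem fromBlocks_neg_transpose_mem_spBracketSpan (A : Matrix (Fin g) (Fin g) R) :
    fromBlocks A 0 0 (-Aᵀ) ∈ spBracketSpan g R := by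
  induction A using Matrix.induction_on' with
  | h_zero => simp [(spBracketSpan g R).zero_mem]
  | h_add A A' hA hA' =>
    simpa [fromBlocks_add, add_comm] using (spBracketSpan g R).add_mem hA hA'
  | h_std_basis i j x =>
    simpa [fromBlocks_smul, smul_single] using
      (spBracketSpan g R).smul_mem x (fromBlocks_single_mem_spBracketSpan i j)

theorem two_smul_fromBlocks_mem_spBracketSpan {B C : Matrix (Fin g) (Fin g) R}
    (hB : Bᵀ = B) (hC : Cᵀ = C) :
    (2 : R) • fromBlocks 0 B C 0 ∈ spBracketSpan g R := by
  have key : fromBlocks 1 0 0 (-1) * fromBlocks 0 B (-C) 0 -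
      fromBlocks 0 B (-C) 0 * fromBlocks 1 0 0 (-1) = (2 : R) • fromBlocks 0 B C 0 := by
    rw [fromBlocks_multiply, fromBlocks_multiply, sub_eq_add_neg, fromBlocks_neg, fromBlocks_add,
      fromBlocks_smul]
    simp [two_smul]
  rw [← key]
  exact bracket_mem_spBracketSpan (fromBlocks_mem_sp_iff.2 ⟨by simp, by simp, by simp⟩)
    (fromBlocks_mem_sp_iff.2 ⟨hB, by rw [transpose_neg, hC], by simp⟩)

theorem two_smul_mem_spBracketSpan {M : Matrix (Fin g ⊕ Fin g) (Fin g ⊕ Fin g) R}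
    (hM : M ∈ sp g R) : (2 : R) • M ∈ spBracketSpan g R := by
  obtain ⟨hB, hC, hE⟩ := mem_sp_iff_toBlocks.1 hM
  have hsplit : M = fromBlocks M.toBlocks₁₁ 0 0 (-M.toBlocks₁₁ᵀ) +
      fromBlocks 0 M.toBlocks₁₂ M.toBlocks₂₁ 0 := by
    rw [fromBlocks_add, add_zero, zero_add, zero_add, add_zero, ← hE, fromBlocks_toBlocks]
  rw [hsplit, smul_add]
  exact add_mem ((spBracketSpan g R).smul_mem 2 (fromBlocks_neg_transpose_mem_spBracketSpan _))
    (two_smul_fromBlocks_mem_spBracketSpan hB hC)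

end

theorem two_smul_sp_subset_commutator_span_general (g : ℕ) :
    ∀ M ∈ sp g (ZMod 4),
      (2 : ZMod 4) • M ∈ Submodule.span (ZMod 4)
        {X | ∃ A ∈ sp g (ZMod 4), ∃ B ∈ sp g (ZMod 4), X = A * B - B * A} :=
  fun _ => two_smul_mem_spBracketSpan

/-- For all `g ≥ 1`, the commutator subalgebra of `sp_{2g}(ℤ/4ℤ)` contains
`2·sp_{2g}(ℤ/2ℤ)`, i.e. every matrix `2M` with `M ∈ sp_{2g}(ℤ/4ℤ)` lies in the
span of brackets. -/
theorem two_smul_sp_subset_commutator_span (g : ℕ) (hg : 1 ≤ g) :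
    ∀ M ∈ sp g (ZMod 4),
      (2 : ZMod 4) • M ∈ Submodule.span (ZMod 4)
        {X | ∃ A ∈ sp g (ZMod 4), ∃ B ∈ sp g (ZMod 4), X = A * B - B * A} :=
  two_smul_sp_subset_commutator_span_general g
end

section
/- Let A/K be an abelian surface over a number field with End_{K̄}(A) = ℤ, and let v be a place of good reduction such that the splitting field F(v) of the Frobenius characteristic polynomial f_v(x) has Galois group D_4 over ℚ. Then for any three distinct eigenvalues x, y, z of Frob_v (roots of f_v), we have y² ≠ xz. -/
open Polynomial IntermediateField ComplexConjugate

/-! Complex conjugation permutes the four roots without fixed points and sends a root `r` to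
`q / r`: `|r|² = q`, and `r² = q` is impossible for a root of an irreducible quartic. If `y² = xz`
for distinct roots, then `{x, z}` is not the conjugate pair disjoint from `{y, ȳ}` (that would
force `y² = q`), so one of `x, z` is `ȳ = q / y` and the other is `y² / ȳ`. With its conjugate
this puts all four roots in `ℚ(y)`, so the splitting field is `ℚ(y)`, of degree `4 < 8 = |D₄|`. -/

namespace Finset

variable {α : Type*} [DecidableEq α] {σ : α → α} {S : Finset α}

theorem eq_of_involutive_of_card_le_four (hσ : Function.Involutive σ) (hS : S.card ≤ 4)
    (hσS : ∀ r ∈ S, σ r ∈ S) (hfix : ∀ r ∈ S, σ r ≠ r) {y w : α} (hy : y ∈ S) (hw : w ∈ S)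
    (hwy : w ≠ y) (hwσy : w ≠ σ y) :
    S = {y, σ y, w, σ w} := by
  have hσwy : σ w ≠ y := fun h => hwσy (by rw [← h, hσ])
  have hσwσy : σ w ≠ σ y := hσ.injective.ne hwy
  refine (eq_of_subset_of_card_le ?_ ?_).symm
  · simp [insert_subset_iff, hy, hw, hσS]
  · rw [card_insert_of_notMem, card_insert_of_notMem, card_pair (hfix w hw).symm]
    · exact hS
    · simp [hwσy.symm, hσwσy.symm]
    · simp [(hfix y hy).symm, hwy.symm, hσwy.symm]

theorem eq_or_eq_of_sq_eq_mul [CommMonoid α] (hσ : Function.Involutive σ) (hS : S.card ≤ 4)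
    (hσS : ∀ r ∈ S, σ r ∈ S) (hfix : ∀ r ∈ S, σ r ≠ r) {c : α} (hmul : ∀ r ∈ S, r * σ r = c)
    {x y z : α} (hx : x ∈ S) (hy : y ∈ S) (hz : z ∈ S) (hxy : x ≠ y) (hyz : y ≠ z) (hxz : x ≠ z)
    (hsq : y ^ 2 = x * z) (hyc : y ^ 2 ≠ c) :
    σ y = x ∨ σ y = z := by
  by_contra! h
  have hS' := eq_of_involutive_of_card_le_four hσ hS hσS hfix hy hx hxy h.1.symm
  rw [hS'] at hz
  simp only [mem_insert, mem_singleton] at hz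
  obtain rfl | rfl | rfl | rfl := hz
  · exact hyz rfl
  · exact h.2 rfl
  · exact hxz rfl
  · exact hyc (hsq.trans (hmul x hx))
end Finset

theorem Finset.coe_subset_adjoin_of_sq_eq_mul {K L : Type*} [Field K] [Field L] [Algebra K L]
    [DecidableEq L] {σ : L → L} {S : Finset L} (hσ : Function.Involutive σ) (hS : S.card ≤ 4)
    (hσS : ∀ r ∈ S, σ r ∈ S) (hfix : ∀ r ∈ S, σ r ≠ r) {c : K} (hc : c ≠ 0)
    (hmul : ∀ r ∈ S, r * σ r = algebraMap K L c)
    {x y z : L} (hx : x ∈ S) (hy : y ∈ S) (hz : z ∈ S) (hxy : x ≠ y) (hyz : y ≠ z) (hxz : x ≠ z)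
    (hsq : y ^ 2 = x * z) (hyc : y ^ 2 ≠ algebraMap K L c) :
    (S : Set L) ⊆ K⟮y⟯ := by
  wlog hσy : σ y = x generalizing x z
  · exact this hz hx hyz.symm hxy.symm hxz.symm (hsq.trans (mul_comm x z))
      ((eq_or_eq_of_sq_eq_mul hσ hS hσS hfix hmul hx hy hz hxy hyz hxz hsq hyc).resolve_left hσy)
  have hne : ∀ r ∈ S, r ≠ 0 := fun r hr =>
    left_ne_zero_of_mul (by rw [hmul r hr]; exact (_root_.map_ne_zero _).mpr hc)
  have hcK : algebraMap K L c ∈ K⟮y⟯ := IntermediateField.algebraMap_mem _ c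
  have hyK : y ∈ K⟮y⟯ := mem_adjoin_simple_self K y
  have hσ_eq : ∀ r ∈ S, σ r = algebraMap K L c / r := fun r hr =>
    eq_div_of_mul_eq (hne r hr) (by rw [mul_comm, hmul r hr])
  have hxK : x ∈ K⟮y⟯ := by
    rw [← hσy, hσ_eq y hy]
    exact div_mem hcK hyK
  have hzK : z ∈ K⟮y⟯ := by
    rw [eq_div_of_mul_eq (hne x hx) (show z * x = y ^ 2 by rw [hsq, mul_comm])]
    exact div_mem (pow_mem hyK 2) hxK
  have hσzK : σ z ∈ K⟮y⟯ := by
    rw [hσ_eq z hz]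
    exact div_mem hcK hzK
  rw [eq_of_involutive_of_card_le_four hσ hS hσS hfix hy hz hyz.symm (hσy ▸ hxz.symm)]
  simp [Set.insert_subset_iff, hyK, hσy, hxK, hzK, hσzK]

theorem Irreducible.sq_ne_algebraMap {K L : Type*} [Field K] [CommRing L] [IsDomain L]
    [Algebra K L] {g : K[X]} (hirr : Irreducible g) (hdeg : 2 < g.natDegree) {r : L}
    (hr : aeval r g = 0) (c : K) :
    r ^ 2 ≠ algebraMap K L c := by
  intro h
  have hdvd : g ∣ X ^ 2 - C c := (hirr.dvd_iff_aeval_eq_zero hr).mp (by simp [h])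
  have hle := natDegree_le_of_dvd hdvd (X_pow_sub_C_ne_zero two_pos c)
  rw [natDegree_X_pow_sub_C] at hle
  omega

theorem Polynomial.card_gal_eq_natDegree_of_rootSet_subset_adjoin {K L : Type*} [Field K]
    [Field L] [Algebra K L] {g : K[X]} (hirr : Irreducible g) (hsep : g.Separable)
    (hsplit : (g.map (algebraMap K L)).Splits) {y : L} (hy : aeval y g = 0)
    (hroots : g.rootSet L ⊆ K⟮y⟯) :
    Nat.card g.Gal = g.natDegree := by
  have hyint : IsIntegral K y := IsAlgebraic.isIntegral ⟨g, hirr.ne_zero, hy⟩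
  have hadj : adjoin K (g.rootSet L) = K⟮y⟯ := le_antisymm (adjoin_le_iff.mpr hroots)
    (adjoin_simple_le_iff.mpr (subset_adjoin _ _ ((mem_rootSet_of_ne hirr.ne_zero).mpr hy)))
  have := adjoin_rootSet_isSplittingField hsplit
  calc Nat.card g.Gal = Module.finrank K g.SplittingField := Gal.card_of_separable hsep
    _ = Module.finrank K (adjoin K (g.rootSet L)) :=
      (IsSplittingField.algEquiv _ g).toLinearEquiv.finrank_eq.symm
    _ = Module.finrank K K⟮y⟯ := by rw [hadj]
    _ = (minpoly K y).natDegree := adjoin.finrank hyint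
    _ = g.natDegree := by
      rw [← minpoly.eq_of_irreducible hirr hy,
        natDegree_mul_C (inv_ne_zero (leadingCoeff_ne_zero.mpr hirr.ne_zero))]

theorem Complex.mul_conj_eq_of_norm_eq_sqrt {r : ℂ} {q : ℝ} (hq : 0 ≤ q) (h : ‖r‖ = √q) :
    r * conj r = q := by
  rw [Complex.mul_conj, Complex.normSq_eq_norm_sq, h, Real.sq_sqrt hq]

theorem frobenius_eigenvalues_no_relation_general
    (q : ℕ) (hq : 0 < q) (f : Polynomial ℤ)
    (hdeg : f.natDegree = 4)
    (hirr : Irreducible (f.map (Int.castRingHom ℚ)))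
    (habs : ∀ z : ℂ, Polynomial.aeval z f = 0 → ‖z‖ = Real.sqrt q)
    (hgal : Nonempty ((f.map (Int.castRingHom ℚ)).Gal ≃* DihedralGroup 4)) :
    ∀ x y z : ℂ, Polynomial.aeval x f = 0 → Polynomial.aeval y f = 0 →
      Polynomial.aeval z f = 0 → x ≠ y → y ≠ z → x ≠ z → y ^ 2 ≠ x * z := by
  intro x y z hx hy hz hxy hyz hxz hsq
  classical
  set g := f.map (Int.castRingHom ℚ)
  set S := (g.rootSet ℂ).toFinset
  have hmemS : ∀ r, r ∈ S ↔ aeval r f = 0 := fun r => by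
    rw [Set.mem_toFinset, mem_rootSet_of_ne hirr.ne_zero]
    exact Eq.congr_left (aeval_map_algebraMap ℚ r f)
  rw [← hmemS] at hx hy hz
  have hgdeg : g.natDegree = 4 := by
    rw [natDegree_map_eq_of_injective (RingHom.injective_int _), hdeg]
  have hcard : S.card ≤ 4 := by
    rw [Set.toFinset_card, card_rootSet_eq_natDegree hirr.separable (IsAlgClosed.splits _), hgdeg]
  have hσS : ∀ r ∈ S, conj r ∈ S := fun r hr => by
    simpa [S] using rootSet_mapsTo (starRingEnd ℂ).toRatAlgHom (by simpa [S] using hr)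
  have hmul : ∀ r ∈ S, r * conj r = algebraMap ℚ ℂ q := fun r hr => by
    simpa using Complex.mul_conj_eq_of_norm_eq_sqrt q.cast_nonneg (habs r ((hmemS r).1 hr))
  have hsqne : ∀ r ∈ S, r ^ 2 ≠ algebraMap ℚ ℂ q := fun r hr =>
    hirr.sq_ne_algebraMap (by omega) (aeval_eq_zero_of_mem_rootSet (by simpa [S] using hr)) _
  have hfix : ∀ r ∈ S, conj r ≠ r := fun r hr h => hsqne r hr (by rw [← hmul r hr, h, sq])
  have hsub := Finset.coe_subset_adjoin_of_sq_eq_mul Complex.conj_conj hcard hσS hfix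
    (Nat.cast_ne_zero.mpr hq.ne') hmul hx hy hz hxy hyz hxz hsq (hsqne y hy)
  obtain ⟨e⟩ := hgal
  have hgal_card : Nat.card g.Gal = 8 := by rw [Nat.card_congr e.toEquiv, DihedralGroup.nat_card]
  have hgal_card_eq := card_gal_eq_natDegree_of_rootSet_subset_adjoin hirr hirr.separable
    (IsAlgClosed.splits _) (aeval_eq_zero_of_mem_rootSet (by simpa [S] using hy))
    (by simpa [S] using hsub)
  omega

/-- (Lemma on Frobenius eigenvalues of an abelian surface.) Let `f ∈ ℤ[x]` be
monic of degree `4` (the characteristic polynomial of Frobenius at a place `v`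
of good reduction of an abelian surface `A/K` with `End_{K̄}(A) = ℤ`), with
`q = q_v > 0`, such that `f` is irreducible over `ℚ`, all complex roots of `f`
have absolute value `√q` (Weil), and the Galois group of the splitting field
of `f` over `ℚ` is the dihedral group `D₄` of order `8`. Then any three
pairwise distinct roots `x, y, z` of `f` satisfy `y² ≠ xz`. -/
theorem frobenius_eigenvalues_no_relation
    (q : ℕ) (hq : 0 < q) (f : Polynomial ℤ) (hmonic : f.Monic)
    (hdeg : f.natDegree = 4)
    (hirr : Irreducible (f.map (Int.castRingHom ℚ)))
    (habs : ∀ z : ℂ, Polynomial.aeval z f = 0 → ‖z‖ = Real.sqrt q)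
    (hgal : Nonempty ((f.map (Int.castRingHom ℚ)).Gal ≃* DihedralGroup 4)) :
    ∀ x y z : ℂ, Polynomial.aeval x f = 0 → Polynomial.aeval y f = 0 →
      Polynomial.aeval z f = 0 → x ≠ y → y ≠ z → x ≠ z → y ^ 2 ≠ x * z :=
  frobenius_eigenvalues_no_relation_general q hq f hdeg hirr habs hgal
end
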